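/- Let S be a nonempty finite set. For pmfs p, q on S define D_H²(p,q) = (1/2)·Σ_{s∈S} (√p(s) − √q(s))², and for n ≥ 1 define the total variation distance between n-fold product distributions TV_n(p,q) = (1/2)·Σ_{ω ∈ S^n} | ∏_{i=1}^n p(ω_i) − ∏_{i=1}^n q(ω_i) |. If (p_n)_{n≥1} and (q_n)_{n≥1} are sequences of pmfs on S, then TV_n(p_n, q_n) → 0 as n → ∞ if and only if n·D_H²(p_n, q_n) → 0 as n → ∞. -/

import Mathlib

open scoped BigOperators

/-- Squared Hellinger distance between two pmfs on a finite set. -/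
noncomputable def hellSq {S : Type*} [Fintype S] (p q : S → ℝ) : ℝ :=
  (1 / 2) * ∑ s, (Real.sqrt (p s) - Real.sqrt (q s)) ^ 2

/-- Total variation distance between the `n`-fold product distributions of two pmfs on a
finite set `S`. -/
noncomputable def tvProd {S : Type*} [Fintype S] (n : ℕ) (p q : S → ℝ) : ℝ :=
  (1 / 2) * ∑ ω : Fin n → S, |(∏ i, p (ω i)) - ∏ i, q (ω i)|

/-!
Le Cam's inequalities `H² ≤ TV ≤ √(2 H²)` reduce the claim to the squared Hellinger distance
of the product measures. The Bhattacharyya coefficient `1 - H²` is multiplicative under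
products, so `H²(pⁿ, qⁿ) = 1 - (1 - H²(p, q))ⁿ`, and for `h ∈ [0, 1]` the bounds
`1 - exp (-n h) ≤ 1 - (1 - h)ⁿ ≤ n h` show that this tends to `0` exactly when `n h` does.
-/

open Filter Topology Real

noncomputable def tvDist {Ω : Type*} [Fintype Ω] (P Q : Ω → ℝ) : ℝ :=
  (1 / 2) * ∑ x, |P x - Q x|

noncomputable def bhattCoeff {Ω : Type*} [Fintype Ω] (P Q : Ω → ℝ) : ℝ :=
  ∑ x, √(P x) * √(Q x)

def piPow {S : Type*} (n : ℕ) (p : S → ℝ) : (Fin n → S) → ℝ :=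
  fun ω => ∏ i, p (ω i)

lemma abs_sub_eq_abs_sqrt_sub_sqrt_mul {a b : ℝ} (ha : 0 ≤ a) (hb : 0 ≤ b) :
    |a - b| = |√a - √b| * (√a + √b) := by
  rw [← abs_of_nonneg (add_nonneg (sqrt_nonneg a) (sqrt_nonneg b)), ← abs_mul, mul_comm,
    ← sq_sub_sq, sq_sqrt ha, sq_sqrt hb]

lemma sq_sqrt_sub_sqrt_le_abs_sub {a b : ℝ} (ha : 0 ≤ a) (hb : 0 ≤ b) :
    (√a - √b) ^ 2 ≤ |a - b| := by
  have hle : |√a - √b| ≤ √a + √b := by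
    simpa [abs_of_nonneg (sqrt_nonneg _)] using abs_sub (√a) (√b)
  rw [abs_sub_eq_abs_sqrt_sub_sqrt_mul ha hb, ← sq_abs, sq]
  exact mul_le_mul_of_nonneg_left hle (abs_nonneg _)

section LeCam

variable {Ω : Type*} [Fintype Ω] {P Q : Ω → ℝ}

lemma hellSq_nonneg (P Q : Ω → ℝ) : 0 ≤ hellSq P Q := by
  unfold hellSq
  positivity

lemma hellSq_le_tvDist (hP : ∀ x, 0 ≤ P x) (hQ : ∀ x, 0 ≤ Q x) :
    hellSq P Q ≤ tvDist P Q := by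
  unfold hellSq tvDist
  gcongr with x
  exact sq_sqrt_sub_sqrt_le_abs_sub (hP x) (hQ x)

lemma hellSq_eq_one_sub_bhattCoeff (hP : ∀ x, 0 ≤ P x) (hQ : ∀ x, 0 ≤ Q x)
    (hP1 : ∑ x, P x = 1) (hQ1 : ∑ x, Q x = 1) : hellSq P Q = 1 - bhattCoeff P Q := by
  have hsq x : (√(P x) - √(Q x)) ^ 2 = P x + Q x - 2 * (√(P x) * √(Q x)) := by
    rw [sub_sq, sq_sqrt (hP x), sq_sqrt (hQ x)]
    ring
  simp only [hellSq, bhattCoeff, hsq, Finset.sum_sub_distrib, Finset.sum_add_distrib, hP1, hQ1,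
    ← Finset.mul_sum]
  ring

lemma hellSq_le_one (hP : ∀ x, 0 ≤ P x) (hQ : ∀ x, 0 ≤ Q x)
    (hP1 : ∑ x, P x = 1) (hQ1 : ∑ x, Q x = 1) : hellSq P Q ≤ 1 := by
  rw [hellSq_eq_one_sub_bhattCoeff hP hQ hP1 hQ1, sub_le_self_iff]
  exact Finset.sum_nonneg fun x _ => mul_nonneg (sqrt_nonneg _) (sqrt_nonneg _)

lemma sum_sq_sqrt_add_sqrt (hP : ∀ x, 0 ≤ P x) (hQ : ∀ x, 0 ≤ Q x)
    (hP1 : ∑ x, P x = 1) (hQ1 : ∑ x, Q x = 1) :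
    ∑ x, (√(P x) + √(Q x)) ^ 2 = 4 - 2 * hellSq P Q := by
  have hsq x : (√(P x) + √(Q x)) ^ 2 = 2 * (P x + Q x) - (√(P x) - √(Q x)) ^ 2 := by
    rw [← sq_sqrt (hP x), ← sq_sqrt (hQ x), sqrt_sq (sqrt_nonneg _), sqrt_sq (sqrt_nonneg _)]
    ring
  simp only [hellSq, hsq, Finset.sum_sub_distrib, ← Finset.mul_sum, Finset.sum_add_distrib,
    hP1, hQ1]
  ring

lemma tvDist_sq_le_two_mul_hellSq (hP : ∀ x, 0 ≤ P x) (hQ : ∀ x, 0 ≤ Q x)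
    (hP1 : ∑ x, P x = 1) (hQ1 : ∑ x, Q x = 1) : tvDist P Q ^ 2 ≤ 2 * hellSq P Q := by
  have hcs := Finset.sum_mul_sq_le_sq_mul_sq Finset.univ
    (fun x => |√(P x) - √(Q x)|) (fun x => √(P x) + √(Q x))
  simp only [← abs_sub_eq_abs_sqrt_sub_sqrt_mul (hP _) (hQ _), sq_abs,
    sum_sq_sqrt_add_sqrt hP hQ hP1 hQ1] at hcs
  have h2H : ∑ x, (√(P x) - √(Q x)) ^ 2 = 2 * hellSq P Q := by
    rw [hellSq]
    ring
  have hH := hellSq_nonneg P Q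
  rw [h2H] at hcs
  unfold tvDist
  nlinarith

lemma tvDist_le_sqrt_two_mul_hellSq (hP : ∀ x, 0 ≤ P x) (hQ : ∀ x, 0 ≤ Q x)
    (hP1 : ∑ x, P x = 1) (hQ1 : ∑ x, Q x = 1) : tvDist P Q ≤ √(2 * hellSq P Q) :=
  (le_abs_self _).trans (abs_le_sqrt (tvDist_sq_le_two_mul_hellSq hP hQ hP1 hQ1))

end LeCam

lemma piPow_nonneg {S : Type*} {p : S → ℝ} (hp : ∀ s, 0 ≤ p s) (n : ℕ)
    (ω : Fin n → S) : 0 ≤ piPow n p ω :=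
  Finset.prod_nonneg fun i _ => hp (ω i)

section Tensorization

variable {S : Type*} [Fintype S] {p q : S → ℝ}

lemma tvProd_eq_tvDist_piPow (n : ℕ) (p q : S → ℝ) :
    tvProd n p q = tvDist (piPow n p) (piPow n q) :=
  rfl

lemma sum_piPow_eq_one (hp1 : ∑ s, p s = 1) (n : ℕ) : ∑ ω, piPow n p ω = 1 := by
  simp only [piPow, ← Fintype.sum_pow, hp1, one_pow]

lemma bhattCoeff_piPow (hp : ∀ s, 0 ≤ p s) (hq : ∀ s, 0 ≤ q s) (n : ℕ) :
    bhattCoeff (piPow n p) (piPow n q) = bhattCoeff p q ^ n := by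
  rw [bhattCoeff, bhattCoeff, Fintype.sum_pow]
  refine Finset.sum_congr rfl fun ω _ => ?_
  rw [piPow, piPow, sqrt_prod _ fun i _ => hp (ω i), sqrt_prod _ fun i _ => hq (ω i),
    Finset.prod_mul_distrib]

lemma hellSq_piPow (hp : ∀ s, 0 ≤ p s) (hq : ∀ s, 0 ≤ q s)
    (hp1 : ∑ s, p s = 1) (hq1 : ∑ s, q s = 1) (n : ℕ) :
    hellSq (piPow n p) (piPow n q) = 1 - (1 - hellSq p q) ^ n := by
  rw [hellSq_eq_one_sub_bhattCoeff (piPow_nonneg hp n) (piPow_nonneg hq n)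
    (sum_piPow_eq_one hp1 n) (sum_piPow_eq_one hq1 n),
    bhattCoeff_piPow hp hq, hellSq_eq_one_sub_bhattCoeff hp hq hp1 hq1, sub_sub_cancel]

end Tensorization

lemma tendsto_zero_iff_of_le_of_le_sqrt {α : Type*} {l : Filter α} {f g : α → ℝ}
    (hf : ∀ x, 0 ≤ f x) (hfg : ∀ x, f x ≤ g x) (hgf : ∀ x, g x ≤ √(2 * f x)) :
    Tendsto g l (𝓝 0) ↔ Tendsto f l (𝓝 0) := by
  refine ⟨fun hg => squeeze_zero hf hfg hg, fun hf0 => ?_⟩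
  have hsqrt : Tendsto (fun x => √(2 * f x)) l (𝓝 0) := by
    simpa using (hf0.const_mul 2).sqrt
  exact squeeze_zero (fun x => (hf x).trans (hfg x)) hgf hsqrt

lemma one_sub_exp_neg_nat_mul_le {h : ℝ} (h1 : h ≤ 1) (n : ℕ) :
    1 - exp (-(n * h)) ≤ 1 - (1 - h) ^ n := by
  have hpow : (1 - h) ^ n ≤ exp (-h) ^ n :=
    pow_le_pow_left₀ (sub_nonneg.2 h1) (one_sub_le_exp_neg h) n
  rw [← exp_nat_mul, mul_neg] at hpow
  linarith

lemma tendsto_one_sub_one_sub_pow_iff {h : ℕ → ℝ} (h0 : ∀ n, 0 ≤ h n)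
    (h1 : ∀ n, h n ≤ 1) :
    Tendsto (fun n => 1 - (1 - h n) ^ n) atTop (𝓝 0) ↔
      Tendsto (fun n : ℕ => (n : ℝ) * h n) atTop (𝓝 0) := by
  have hexp_nonneg n : 0 ≤ 1 - exp (-(n * h n)) :=
    sub_nonneg.2 (exp_le_one_iff.2 (neg_nonpos.2 (mul_nonneg n.cast_nonneg (h0 n))))
  have bernoulli n : 1 - (1 - h n) ^ n ≤ n * h n := by
    have := one_add_mul_le_pow (a := -h n) (by linarith [h1 n]) n
    rw [← sub_eq_add_neg] at this
    linarith
  refine ⟨fun hlim => ?_, fun hlim => ?_⟩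
  · have hexp : Tendsto (fun n : ℕ => exp (-(n * h n))) atTop (𝓝 1) := by
      have hexp_sub := squeeze_zero hexp_nonneg (fun n => one_sub_exp_neg_nat_mul_le (h1 n) n) hlim
      simpa using hexp_sub.const_sub 1
    simpa using ((continuousAt_log one_ne_zero).tendsto.comp hexp).neg
  · exact squeeze_zero (fun n => (hexp_nonneg n).trans (one_sub_exp_neg_nat_mul_le (h1 n) n))
      bernoulli hlim

theorem tvProd_tendsto_zero_iff_n_mul_hellSq_tendsto_zero_general
    {S : Type*} [Fintype S]
    (p q : ℕ → S → ℝ)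
    (hp0 : ∀ n s, 0 ≤ p n s) (hq0 : ∀ n s, 0 ≤ q n s)
    (hp1 : ∀ n, ∑ s, p n s = 1) (hq1 : ∀ n, ∑ s, q n s = 1) :
    Filter.Tendsto (fun n => tvProd n (p n) (q n)) Filter.atTop (nhds 0) ↔
      Filter.Tendsto (fun n : ℕ => (n : ℝ) * hellSq (p n) (q n)) Filter.atTop (nhds 0) := by
  have hTV : Tendsto (fun n => tvProd n (p n) (q n)) atTop (𝓝 0) ↔
      Tendsto (fun n => hellSq (piPow n (p n)) (piPow n (q n))) atTop (𝓝 0) := by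
    simp only [tvProd_eq_tvDist_piPow]
    exact tendsto_zero_iff_of_le_of_le_sqrt (fun n => hellSq_nonneg _ _)
      (fun n => hellSq_le_tvDist (piPow_nonneg (hp0 n) n) (piPow_nonneg (hq0 n) n))
      (fun n => tvDist_le_sqrt_two_mul_hellSq (piPow_nonneg (hp0 n) n) (piPow_nonneg (hq0 n) n)
        (sum_piPow_eq_one (hp1 n) n) (sum_piPow_eq_one (hq1 n) n))
  simp only [hTV, hellSq_piPow (hp0 _) (hq0 _) (hp1 _) (hq1 _)]
  exact tendsto_one_sub_one_sub_pow_iff (fun n => hellSq_nonneg _ _)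
    (fun n => hellSq_le_one (hp0 n) (hq0 n) (hp1 n) (hq1 n))

/-- For sequences `p n`, `q n` of pmfs on a nonempty finite set `S`, the total
variation distance between the `n`-fold products tends to `0` iff `n · D_H²(p n, q n)` tends
to `0`. -/
theorem tvProd_tendsto_zero_iff_n_mul_hellSq_tendsto_zero
    {S : Type*} [Fintype S] [Nonempty S]
    (p q : ℕ → S → ℝ)
    (hp0 : ∀ n s, 0 ≤ p n s) (hq0 : ∀ n s, 0 ≤ q n s)
    (hp1 : ∀ n, ∑ s, p n s = 1) (hq1 : ∀ n, ∑ s, q n s = 1) :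
    Filter.Tendsto (fun n => tvProd n (p n) (q n)) Filter.atTop (nhds 0) ↔
      Filter.Tendsto (fun n : ℕ => (n : ℝ) * hellSq (p n) (q n)) Filter.atTop (nhds 0) :=
  tvProd_tendsto_zero_iff_n_mul_hellSq_tendsto_zero_general p q hp0 hq0 hp1 hq1
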